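/- At any point c̄ satisfying w·exp(-(x-c̄)²/(2α²)) = y/2 (i.e., corresponding to σ = -y/2), the second derivative of the primal satisfies P''(c̄) = β + y²/(4α²) > 0; hence any such critical point of P is a strict local minimum. -/

import Mathlib

noncomputable def primalP (w x y α β c : ℝ) : ℝ :=
  (1/2) * (w * Real.exp (-(x - c)^2 / (2 * α^2)) - y)^2 + (1/2) * β * c^2

/-- Second derivative of the Gaussian primal, as in the paper. -/
noncomputable def primalPsec (w x y α β c : ℝ) : ℝ :=
  ((x - c)^2 / α^4) * Real.exp (-(x - c)^2 / (2 * α^2)) *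
      (2 * w * Real.exp (-(x - c)^2 / (2 * α^2)) - y)
    + β - (w / α^2) * Real.exp (-(x - c)^2 / (2 * α^2)) *
      (w * Real.exp (-(x - c)^2 / (2 * α^2)) - y)

/-!
Where `w · exp(-(x - c)² / (2α²)) = y / 2`, the factor `2 w exp(…) - y` multiplying `(x - c)²`
in the second derivative vanishes, which leaves `P'' = β + y² / (4α²) > 0`. A critical point
there is then a strict local minimum by the second-derivative test.
-/

open Filter Topology Set SignType

/-- Strict form of `isLocalMin_of_deriv_deriv_pos`: near `x₀` the derivative has the sign of
`x - x₀`, so `f` is strictly monotone on either side of `x₀`. -/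
theorem eventually_lt_of_deriv_deriv_pos {f : ℝ → ℝ} {x₀ : ℝ} (hf : 0 < deriv (deriv f) x₀)
    (hd : deriv f x₀ = 0) (hc : ContinuousAt f x₀) : ∀ᶠ x in 𝓝[≠] x₀, f x₀ < f x := by
  obtain ⟨ε, hε, hsign⟩ := Metric.eventually_nhds_iff_ball.mp
    (eventually_nhdsWithin_sign_eq_of_deriv_pos hf hd)
  rw [Real.ball_eq_Ioo] at hsign
  have hcont : ContinuousOn f (Ioo (x₀ - ε) (x₀ + ε)) := by
    intro y hy
    rcases eq_or_ne y x₀ with rfl | hne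
    · exact hc.continuousWithinAt
    · refine (differentiableAt_of_deriv_ne_zero fun h0 => hne ?_).continuousAt.continuousWithinAt
      have := hsign y hy
      rwa [h0, sign_zero, eq_comm, sign_eq_zero_iff, sub_eq_zero] at this
  filter_upwards [nhdsWithin_le_nhds (Ioo_mem_nhds (sub_lt_self x₀ hε) (lt_add_of_pos_right x₀ hε)),
    self_mem_nhdsWithin] with x hx hne
  have hsub : ∀ {a b}, a ∈ Ioo (x₀ - ε) (x₀ + ε) → b ∈ Ioo (x₀ - ε) (x₀ + ε) →
      Icc a b ⊆ Ioo (x₀ - ε) (x₀ + ε) := fun ha hb => Icc_subset_Ioo ha.1 hb.2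
  have hx₀ : x₀ ∈ Ioo (x₀ - ε) (x₀ + ε) := ⟨sub_lt_self x₀ hε, lt_add_of_pos_right x₀ hε⟩
  rcases lt_or_gt_of_ne hne with hlt | hgt
  · have hanti : StrictAntiOn f (Icc x x₀) := by
      refine strictAntiOn_of_deriv_neg (convex_Icc x x₀) (hcont.mono (hsub hx hx₀)) ?_
      intro y hy
      rw [interior_Icc] at hy
      rw [← sign_eq_neg_one_iff, hsign y (hsub hx hx₀ (Ioo_subset_Icc_self hy)),
        sign_eq_neg_one_iff, sub_neg]
      exact hy.2
    exact hanti (left_mem_Icc.mpr hlt.le) (right_mem_Icc.mpr hlt.le) hlt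
  · have hmono : StrictMonoOn f (Icc x₀ x) := by
      refine strictMonoOn_of_deriv_pos (convex_Icc x₀ x) (hcont.mono (hsub hx₀ hx)) ?_
      intro y hy
      rw [interior_Icc] at hy
      rw [← sign_eq_one_iff, hsign y (hsub hx₀ hx (Ioo_subset_Icc_self hy)),
        sign_eq_one_iff, sub_pos]
      exact hy.1
    exact hmono (left_mem_Icc.mpr hgt.le) (right_mem_Icc.mpr hgt.le) hgt

section Gaussian

variable {w x y α β : ℝ}

noncomputable def gaussian (x α c : ℝ) : ℝ := Real.exp (-(x - c) ^ 2 / (2 * α ^ 2))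

theorem hasDerivAt_gaussian (x : ℝ) (hα : α ≠ 0) (c : ℝ) :
    HasDerivAt (gaussian x α) (gaussian x α c * (x - c) / α ^ 2) c := by
  have hexp : HasDerivAt (fun c : ℝ => -(x - c) ^ 2 / (2 * α ^ 2)) ((x - c) / α ^ 2) c := by
    have := ((((hasDerivAt_id' c).const_sub x).pow 2).neg).div_const (2 * α ^ 2)
    refine this.congr_deriv ?_
    field_simp
    ring
  exact hexp.exp.congr_deriv (mul_div_assoc _ _ _).symm

theorem hasDerivAt_primalP (hα : α ≠ 0) (c : ℝ) :
    HasDerivAt (primalP w x y α β)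
      ((w * gaussian x α c - y) * (w * gaussian x α c * (x - c) / α ^ 2) + β * c) c := by
  have hsq := ((((hasDerivAt_gaussian x hα c).const_mul w).sub_const y).pow 2).const_mul (1 / 2 : ℝ)
  have hquad := (hasDerivAt_pow 2 c).const_mul ((1 / 2 : ℝ) * β)
  refine (hsq.add hquad).congr_deriv ?_
  push_cast
  ring

/-- Unlike `primalPsec`, this carries the factor `w` in its first term. -/
noncomputable def primalPderiv2 (w x y α β c : ℝ) : ℝ :=
  w * gaussian x α c * (x - c) ^ 2 / α ^ 4 * (2 * w * gaussian x α c - y) + β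
    - w * gaussian x α c / α ^ 2 * (w * gaussian x α c - y)

theorem hasDerivAt_deriv_primalP (hα : α ≠ 0) (c : ℝ) :
    HasDerivAt (deriv (primalP w x y α β)) (primalPderiv2 w x y α β c) c := by
  have hderiv : deriv (primalP w x y α β) = fun c =>
      (w * gaussian x α c - y) * (w * gaussian x α c * (x - c) / α ^ 2) + β * c :=
    funext fun c => (hasDerivAt_primalP hα c).deriv
  have hE := (hasDerivAt_gaussian x hα c).const_mul w
  have hP' := (hE.sub_const y).mul ((hE.mul ((hasDerivAt_id' c).const_sub x)).div_const (α ^ 2))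
    |>.add ((hasDerivAt_id' c).const_mul β)
  rw [hderiv]
  refine hP'.congr_deriv ?_
  simp only [Pi.mul_apply, primalPderiv2]
  field_simp
  ring

theorem primalPderiv2_of_mul_gaussian_eq_half (c : ℝ) (h : w * gaussian x α c = y / 2) :
    primalPderiv2 w x y α β c = β + y ^ 2 / (4 * α ^ 2) := by
  rw [primalPderiv2, mul_assoc 2, h]
  ring

theorem primalPsec_of_mul_gaussian_eq_half (c : ℝ) (h : w * gaussian x α c = y / 2) :
    primalPsec w x y α β c = β + y ^ 2 / (4 * α ^ 2) := by
  have h' : w * Real.exp (-(x - c) ^ 2 / (2 * α ^ 2)) = y / 2 := h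
  rw [primalPsec, mul_assoc 2, h', div_mul_eq_mul_div w, h']
  ring

end Gaussian

theorem pseudo_point_second_derivative_positive_general
    (w x y α β : ℝ)
    (hα : α ≠ 0) (hβ : 0 < β) (cb : ℝ)
    (hcb : w * Real.exp (-(x - cb)^2 / (2 * α^2)) = y / 2) :
    primalPsec w x y α β cb = β + y^2 / (4 * α^2) ∧
    0 < β + y^2 / (4 * α^2) ∧
    (deriv (fun c => primalP w x y α β c) cb = 0 →
      ∀ᶠ c in nhdsWithin cb {cb}ᶜ, primalP w x y α β cb < primalP w x y α β c) := by
  have hsec : primalPsec w x y α β cb = β + y ^ 2 / (4 * α ^ 2) :=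
    primalPsec_of_mul_gaussian_eq_half cb hcb
  have hpos : 0 < β + y ^ 2 / (4 * α ^ 2) := by positivity
  refine ⟨hsec, hpos, fun hcrit => eventually_lt_of_deriv_deriv_pos ?_ hcrit
    (hasDerivAt_primalP hα cb).continuousAt⟩
  rwa [(hasDerivAt_deriv_primalP hα cb).deriv, primalPderiv2_of_mul_gaussian_eq_half cb hcb]

/-- At any c̄ with w·e^{-(x-c̄)²/(2α²)} = y/2 one has P''(c̄) = β + y²/(4α²) > 0;
hence any such critical point of P is a strict local minimum. -/
theorem pseudo_point_second_derivative_positive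
    (w x y α β : ℝ) (hw : 0 < w) (hy : 0 < y) (hyw : y < 2 * w)
    (hα : α ≠ 0) (hβ : 0 < β) (cb : ℝ)
    (hcb : w * Real.exp (-(x - cb)^2 / (2 * α^2)) = y / 2) :
    primalPsec w x y α β cb = β + y^2 / (4 * α^2) ∧
    0 < β + y^2 / (4 * α^2) ∧
    (deriv (fun c => primalP w x y α β c) cb = 0 →
      ∀ᶠ c in nhdsWithin cb {cb}ᶜ, primalP w x y α β cb < primalP w x y α β c) :=
  pseudo_point_second_derivative_positive_general w x y α β hα hβ cb hcb
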